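/- With the notation of the Riccati ODE above, the solution ζ satisfies 0 ≤ ζ(t) ≤ min( (1/δ⁺) e^{(δ⁺−δ⁻)T}, 1/|δ⁻| ) for all t ∈ [0,T]. In particular 1 + bζ(t) > 0 for all t ∈ [0,T]. -/
import Mathlib


/-- the solution ζ of the Riccati ODE satisfies
0 ≤ ζ(t) ≤ min((1/δ⁺) e^{(δ⁺−δ⁻)T}, 1/|δ⁻|) on [0,T]; in particular 1 + bζ(t) > 0. -/
theorem riccati_zeta_bounds (κ b γ β T : ℝ)
    (hκ : 0 < κ) (hb : 0 < b) (hγ : 0 < γ) (hβ : 0 < β) (hT : 0 < T) :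
    let A : ℝ := (κ - b + γ / β) / 2
    let B : ℝ := γ * b / β
    let δp : ℝ := -A + Real.sqrt (A ^ 2 + B)
    let δm : ℝ := -A - Real.sqrt (A ^ 2 + B)
    let ζ : ℝ → ℝ := fun t =>
      (Real.exp ((δp - δm) * (T - t)) - 1) /
        (δp - δm * Real.exp ((δp - δm) * (T - t)))
    ∀ t ∈ Set.Icc (0 : ℝ) T,
      0 ≤ ζ t ∧
      ζ t ≤ min ((1 / δp) * Real.exp ((δp - δm) * T)) (1 / |δm|) ∧
      0 < 1 + b * ζ t := by
  intro A B δp δm ζ t ht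
  obtain ⟨ht0, htT⟩ := ht
  have hB : 0 < B := by positivity
  have hS0 : 0 ≤ Real.sqrt (A ^ 2 + B) := Real.sqrt_nonneg _
  have hS2 : Real.sqrt (A ^ 2 + B) ^ 2 = A ^ 2 + B := Real.sq_sqrt (by positivity)
  have hSA : |A| < Real.sqrt (A ^ 2 + B) := by
    nlinarith [sq_abs A, abs_nonneg A]
  have hA1 : A ≤ |A| := le_abs_self A
  have hA2 : -A ≤ |A| := neg_le_abs A
  have hp : 0 < δp := by simp only [δp]; linarith
  have hm : δm < 0 := by simp only [δm]; linarith
  have hs : 0 ≤ T - t := by linarith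
  set E := Real.exp ((δp - δm) * (T - t)) with hE
  have hE1 : 1 ≤ E := Real.one_le_exp (by nlinarith)
  set eT := Real.exp ((δp - δm) * T) with heT
  have hEeT : E ≤ eT := Real.exp_le_exp.2 (by nlinarith)
  have heT0 : 0 < eT := Real.exp_pos _
  have hden : 0 < δp - δm * E := by nlinarith
  have hz0 : 0 ≤ ζ t := div_nonneg (by linarith) hden.le
  refine ⟨hz0, le_min ?_ ?_, by nlinarith⟩
  · rw [show (1 / δp) * eT = eT / δp by ring]
    rw [div_le_div_iff₀ hden hp]
    nlinarith [mul_nonneg (mul_nonneg heT0.le (neg_nonneg.2 hm.le)) (by linarith : (0:ℝ) ≤ E)]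
  · rw [abs_of_neg hm]
    rw [div_le_div_iff₀ hden (by linarith : (0:ℝ) < -δm)]
    nlinarith
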